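/- Let W(γ) = Z(γ)² with Z(γ) = (1/L)∑_{ℓ} γ^ℓ, and for a probability x on {-1,+1}^L define the marginal selection coefficient S^{ℓ₀}(x) := Cov_x(W(g), 1_{g^{ℓ₀}=+1}). Then |S^{ℓ₀}(x) - S^{ℓ₀}(π(x))| ≤ (2/L²) ∑_{A ⊆ [L]∖{ℓ₀}, 1 ≤ |A| ≤ 2} ||x^{{ℓ₀}∪A} - π(x^{{ℓ₀}∪A})||₁, where π denotes the product-of-marginals projection. -/
import Mathlib


open Finset

noncomputable def spin (b : Bool) : ℝ := if b then 1 else -1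

/-- The additive trait `Z(γ) = (1/L) ∑_ℓ γ^ℓ`. -/
noncomputable def trait {L : ℕ} (γ : Fin L → Bool) : ℝ :=
  (1 / (L : ℝ)) * ∑ ℓ : Fin L, spin (γ ℓ)

/-- Expectation of `f(g)` under the probability vector `x`. -/
noncomputable def expec {L : ℕ} (x : (Fin L → Bool) → ℝ) (f : (Fin L → Bool) → ℝ) : ℝ :=
  ∑ γ : Fin L → Bool, f γ * x γ

/-- Marginal selection coefficient at locus `ℓ₀` for the log-fitness `W = Z²`:
`S^{ℓ₀}(x) = Cov_x(Z(g)², 1_{g^{ℓ₀}=+1})`. -/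
noncomputable def selCoef {L : ℕ} (x : (Fin L → Bool) → ℝ) (ℓ₀ : Fin L) : ℝ :=
  expec x (fun γ => trait γ ^ 2 * (if γ ℓ₀ = true then 1 else 0))
    - expec x (fun γ => trait γ ^ 2) * expec x (fun γ => if γ ℓ₀ = true then 1 else 0)

/-- The marginal `x^A` on `{-1,+1}^A`. -/
noncomputable def marg {L : ℕ} (A : Finset (Fin L)) (x : (Fin L → Bool) → ℝ) :
    (A → Bool) → ℝ :=
  fun γ => ∑ δ : Fin L → Bool, if (∀ ℓ : A, δ ℓ.1 = γ ℓ) then x δ else 0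

/-- One-locus marginal `x^{{ℓ}}(b)`. -/
noncomputable def oneMarg {L : ℕ} (x : (Fin L → Bool) → ℝ) (ℓ : Fin L) (b : Bool) : ℝ :=
  ∑ γ : Fin L → Bool, if γ ℓ = b then x γ else 0

/-- Product-of-marginals projection of the marginal on `B`:
`π(x^B) = ⊗_{ℓ∈B} x^{{ℓ}}`. -/
noncomputable def piMarg {L : ℕ} (B : Finset (Fin L)) (x : (Fin L → Bool) → ℝ) :
    (B → Bool) → ℝ :=
  fun γ => ∏ ℓ : B, oneMarg x ℓ.1 (γ ℓ)

/-- Full product-of-marginals projection `π(x)` on the whole hypercube. -/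
noncomputable def piProj {L : ℕ} (x : (Fin L → Bool) → ℝ) : (Fin L → Bool) → ℝ :=
  fun γ => ∏ ℓ : Fin L, oneMarg x ℓ (γ ℓ)

section Helpers
variable {L : ℕ}

lemma sum_prod_eq_prod_sum (g : Fin L → Bool → ℝ) :
    ∑ δ : Fin L → Bool, ∏ ℓ, g ℓ (δ ℓ) = ∏ ℓ, ∑ b, g ℓ b :=
  (Fintype.prod_sum g).symm

lemma oneMarg_total (x : (Fin L → Bool) → ℝ) (hx1 : ∑ γ : Fin L → Bool, x γ = 1)
    (ℓ : Fin L) : ∑ b, oneMarg x ℓ b = 1 := by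
  rw [← hx1]
  unfold oneMarg
  rw [Finset.sum_comm]
  refine Finset.sum_congr rfl fun γ _ => ?_
  simp

lemma sum_piProj (x : (Fin L → Bool) → ℝ) (hx1 : ∑ γ : Fin L → Bool, x γ = 1) :
    ∑ γ : Fin L → Bool, piProj x γ = 1 := by
  unfold piProj
  rw [sum_prod_eq_prod_sum]
  exact Finset.prod_eq_one fun ℓ _ => oneMarg_total x hx1 ℓ

end Helpers
section Marg
variable {L : ℕ}

lemma marg_piProj (x : (Fin L → Bool) → ℝ) (hx1 : ∑ γ : Fin L → Bool, x γ = 1)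
    (B : Finset (Fin L)) (η : ↥B → Bool) :
    marg B (piProj x) η = piMarg B x η := by
  classical
  unfold marg piProj piMarg
  have step1 : ∀ δ : Fin L → Bool,
      (if (∀ ℓ : ↥B, δ ℓ.1 = η ℓ) then ∏ ℓ, oneMarg x ℓ (δ ℓ) else 0)
        = ∏ ℓ, (if h : ℓ ∈ B then (if δ ℓ = η ⟨ℓ, h⟩ then oneMarg x ℓ (δ ℓ) else 0)
            else oneMarg x ℓ (δ ℓ)) := by
    intro δ
    by_cases h : ∀ ℓ : ↥B, δ ℓ.1 = η ℓ
    · rw [if_pos h]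
      refine Finset.prod_congr rfl fun ℓ _ => ?_
      by_cases hℓ : ℓ ∈ B
      · rw [dif_pos hℓ, if_pos (h ⟨ℓ, hℓ⟩)]
      · rw [dif_neg hℓ]
    · rw [if_neg h]
      push_neg at h
      obtain ⟨ℓ, hℓ⟩ := h
      refine (Finset.prod_eq_zero (Finset.mem_univ ℓ.1) ?_).symm
      rw [dif_pos ℓ.2, if_neg]
      simpa using hℓ
  rw [Finset.sum_congr rfl fun δ _ => step1 δ,
    sum_prod_eq_prod_sum (fun ℓ b => if h : ℓ ∈ B then
      (if b = η ⟨ℓ, h⟩ then oneMarg x ℓ b else 0) else oneMarg x ℓ b)]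
  have hfac : ∀ ℓ : Fin L, (∑ b, (if h : ℓ ∈ B then (if b = η ⟨ℓ, h⟩ then oneMarg x ℓ b else 0)
      else oneMarg x ℓ b)) = if h : ℓ ∈ B then oneMarg x ℓ (η ⟨ℓ, h⟩) else 1 := by
    intro ℓ
    by_cases h : ℓ ∈ B
    · simp only [dif_pos h]
      simp
    · simp only [dif_neg h]
      exact oneMarg_total x hx1 ℓ
  rw [Finset.prod_congr rfl fun ℓ _ => hfac ℓ]
  rw [← Finset.prod_subset (Finset.subset_univ B)
    (fun ℓ _ hℓ => by rw [dif_neg hℓ])]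
  rw [Finset.univ_eq_attach, ← Finset.prod_attach B
    (fun ℓ => if h : ℓ ∈ B then oneMarg x ℓ (η ⟨ℓ, h⟩) else 1)]
  refine Finset.prod_congr rfl fun ℓ _ => ?_
  rw [dif_pos ℓ.2]

end Marg
section OneM
variable {L : ℕ}

lemma oneMarg_eq_marg (w : (Fin L → Bool) → ℝ) (ℓ : Fin L) (b : Bool) :
    oneMarg w ℓ b = marg {ℓ} w (fun _ => b) := by
  unfold oneMarg marg
  refine Finset.sum_congr rfl fun δ _ => ?_
  congr 1
  simp only [eq_iff_iff]
  constructor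
  · intro h m
    have : m.1 = ℓ := Finset.mem_singleton.mp m.2
    rw [this, h]
  · intro h
    exact h ⟨ℓ, Finset.mem_singleton_self ℓ⟩

lemma piMarg_singleton (x : (Fin L → Bool) → ℝ) (ℓ : Fin L) (b : Bool) :
    piMarg {ℓ} x (fun _ => b) = oneMarg x ℓ b := by
  unfold piMarg
  rw [Finset.prod_coe_sort ({ℓ} : Finset (Fin L)) (fun m => oneMarg x m b)]
  simp

lemma oneMarg_piProj (x : (Fin L → Bool) → ℝ) (hx1 : ∑ γ : Fin L → Bool, x γ = 1)
    (ℓ : Fin L) (b : Bool) : oneMarg (piProj x) ℓ b = oneMarg x ℓ b := by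
  rw [oneMarg_eq_marg, marg_piProj x hx1, piMarg_singleton]

end OneM
section Proj
variable {L : ℕ}

lemma marg_eq_fiber_sum (w : (Fin L → Bool) → ℝ) (B : Finset (Fin L)) (η : ↥B → Bool) :
    marg B w η = ∑ δ ∈ Finset.univ.filter
      (fun δ : Fin L → Bool => (fun ℓ : ↥B => δ ℓ.1) = η), w δ := by
  unfold marg
  rw [Finset.sum_filter]
  refine Finset.sum_congr rfl fun δ _ => ?_
  congr 1
  simp [funext_iff, eq_iff_iff]

lemma proj_bound (x : (Fin L → Bool) → ℝ) (hx1 : ∑ γ : Fin L → Bool, x γ = 1)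
    (B : Finset (Fin L)) (φ : (Fin L → Bool) → ℝ)
    (hdep : ∀ γ γ' : Fin L → Bool, (∀ ℓ ∈ B, γ ℓ = γ' ℓ) → φ γ = φ γ')
    (hbd : ∀ γ, |φ γ| ≤ 1) :
    |∑ γ : Fin L → Bool, φ γ * (x γ - piProj x γ)|
      ≤ ∑ η : ↥B → Bool, |marg B x η - piMarg B x η| := by
  classical
  set r : (Fin L → Bool) → (↥B → Bool) := fun γ ℓ => γ ℓ.1 with hr
  set e : (↥B → Bool) → (Fin L → Bool) :=
    fun η ℓ => if h : ℓ ∈ B then η ⟨ℓ, h⟩ else false with he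
  have key : ∑ γ : Fin L → Bool, φ γ * (x γ - piProj x γ)
      = ∑ η : ↥B → Bool, φ (e η) * (marg B x η - piMarg B x η) := by
    rw [← Finset.sum_fiberwise Finset.univ r (fun γ => φ γ * (x γ - piProj x γ))]
    refine Finset.sum_congr rfl fun η _ => ?_
    have hφ : ∀ γ ∈ Finset.univ.filter (fun γ => r γ = η), φ γ = φ (e η) := by
      intro γ hγ
      have hγ' : r γ = η := (Finset.mem_filter.mp hγ).2
      refine hdep γ (e η) fun ℓ hℓ => ?_
      rw [he]
      simp only [dif_pos hℓ]
      rw [← hγ']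
    calc ∑ γ ∈ Finset.univ.filter (fun γ => r γ = η), φ γ * (x γ - piProj x γ)
        = ∑ γ ∈ Finset.univ.filter (fun γ => r γ = η), φ (e η) * (x γ - piProj x γ) :=
          Finset.sum_congr rfl fun γ hγ => by rw [hφ γ hγ]
      _ = φ (e η) * ((∑ γ ∈ Finset.univ.filter (fun γ => r γ = η), x γ)
            - ∑ γ ∈ Finset.univ.filter (fun γ => r γ = η), piProj x γ) := by
          rw [← Finset.mul_sum, Finset.sum_sub_distrib]
      _ = φ (e η) * (marg B x η - piMarg B x η) := by
          rw [← marg_eq_fiber_sum x B η, ← marg_eq_fiber_sum (piProj x) B η,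
            marg_piProj x hx1]
  rw [key]
  refine (Finset.abs_sum_le_sum_abs _ _).trans ?_
  refine Finset.sum_le_sum fun η _ => ?_
  rw [abs_mul]
  exact mul_le_of_le_one_left (abs_nonneg _) (hbd (e η))

end Proj
section Expand
variable {L : ℕ}

lemma expec_ind (w : (Fin L → Bool) → ℝ) (ℓ₀ : Fin L) :
    expec w (fun γ => if γ ℓ₀ = true then 1 else 0) = oneMarg w ℓ₀ true := by
  unfold expec oneMarg
  refine Finset.sum_congr rfl fun γ _ => ?_
  by_cases h : γ ℓ₀ = true <;> simp [h]

lemma selCoef_expand (w : (Fin L → Bool) → ℝ) (ℓ₀ : Fin L) (c : ℝ)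
    (hc : expec w (fun γ => if γ ℓ₀ = true then 1 else 0) = c) :
    selCoef w ℓ₀ = (1 / (L : ℝ) ^ 2) * ∑ p : Fin L × Fin L,
      ∑ γ : Fin L → Bool, (spin (γ p.1) * spin (γ p.2)
        * ((if γ ℓ₀ = true then 1 else 0) - c)) * w γ := by
  unfold selCoef
  rw [hc]
  unfold expec trait
  rw [Finset.sum_comm, Finset.mul_sum, Finset.sum_mul, ← Finset.sum_sub_distrib]
  refine Finset.sum_congr rfl fun γ _ => ?_
  refine Eq.symm ?_
  rw [Finset.mul_sum]
  have hS : ∑ p : Fin L × Fin L, spin (γ p.1) * spin (γ p.2)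
      = (∑ ℓ, spin (γ ℓ)) * (∑ ℓ, spin (γ ℓ)) := by
    rw [Finset.sum_mul_sum, ← Finset.univ_product_univ, Finset.sum_product]
  calc ∑ p : Fin L × Fin L, 1 / (L : ℝ) ^ 2 * ((spin (γ p.1) * spin (γ p.2)
        * ((if γ ℓ₀ = true then 1 else 0) - c)) * w γ)
      = ∑ p : Fin L × Fin L, spin (γ p.1) * spin (γ p.2)
          * (1 / (L : ℝ) ^ 2 * (((if γ ℓ₀ = true then 1 else 0) - c) * w γ)) :=
        Finset.sum_congr rfl fun p _ => by ring
    _ = (∑ p : Fin L × Fin L, spin (γ p.1) * spin (γ p.2))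
          * (1 / (L : ℝ) ^ 2 * (((if γ ℓ₀ = true then 1 else 0) - c) * w γ)) :=
        (Finset.sum_mul _ _ _).symm
    _ = (∑ ℓ, spin (γ ℓ)) * (∑ ℓ, spin (γ ℓ))
          * (1 / (L : ℝ) ^ 2 * (((if γ ℓ₀ = true then 1 else 0) - c) * w γ)) := by rw [hS]
    _ = (1 / (L : ℝ) * ∑ ℓ : Fin L, spin (γ ℓ)) ^ 2 * (if γ ℓ₀ = true then 1 else 0) * w γ
          - (1 / (L : ℝ) * ∑ ℓ : Fin L, spin (γ ℓ)) ^ 2 * w γ * c := by ring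

end Expand
section DLem
variable {L : ℕ}

/-- per-pair covariance difference -/
noncomputable def Dterm (x : (Fin L → Bool) → ℝ) (ℓ₀ : Fin L) (c : ℝ) (p : Fin L × Fin L) : ℝ :=
  ∑ γ : Fin L → Bool, (spin (γ p.1) * spin (γ p.2)
    * ((if γ ℓ₀ = true then 1 else 0) - c)) * (x γ - piProj x γ)

lemma Dterm_diag (x : (Fin L → Bool) → ℝ) (hx1 : ∑ γ : Fin L → Bool, x γ = 1)
    (ℓ₀ : Fin L) (ℓ : Fin L) :
    Dterm x ℓ₀ (oneMarg x ℓ₀ true) (ℓ, ℓ) = 0 := by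
  unfold Dterm
  have h1 : ∀ γ : Fin L → Bool, (spin (γ ℓ) * spin (γ ℓ)
      * ((if γ ℓ₀ = true then 1 else 0) - oneMarg x ℓ₀ true)) * (x γ - piProj x γ)
      = ((if γ ℓ₀ = true then 1 else 0) * x γ - (if γ ℓ₀ = true then 1 else 0) * piProj x γ)
        - (oneMarg x ℓ₀ true * x γ - oneMarg x ℓ₀ true * piProj x γ) := by
    intro γ
    have : spin (γ ℓ) * spin (γ ℓ) = 1 := by cases γ ℓ <;> norm_num [spin]
    rw [this]; ring
  rw [Finset.sum_congr rfl fun γ _ => h1 γ]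
  rw [Finset.sum_sub_distrib, Finset.sum_sub_distrib, Finset.sum_sub_distrib]
  have e1 : ∑ γ : Fin L → Bool, (if γ ℓ₀ = true then (1:ℝ) else 0) * x γ
      = oneMarg x ℓ₀ true := by
    rw [show (∑ γ : Fin L → Bool, (if γ ℓ₀ = true then (1:ℝ) else 0) * x γ)
      = expec x (fun γ => if γ ℓ₀ = true then 1 else 0) from rfl, expec_ind]
  have e2 : ∑ γ : Fin L → Bool, (if γ ℓ₀ = true then (1:ℝ) else 0) * piProj x γ
      = oneMarg x ℓ₀ true := by
    rw [show (∑ γ : Fin L → Bool, (if γ ℓ₀ = true then (1:ℝ) else 0) * piProj x γ)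
      = expec (piProj x) (fun γ => if γ ℓ₀ = true then 1 else 0) from rfl, expec_ind,
      oneMarg_piProj x hx1]
  rw [e1, e2, ← Finset.mul_sum, ← Finset.mul_sum, hx1, sum_piProj x hx1]
  ring

lemma insert_erase_pair (ℓ₀ a b : Fin L) :
    insert ℓ₀ (({a, b} : Finset (Fin L)).erase ℓ₀) = insert ℓ₀ {a, b} := by
  ext z
  simp only [Finset.mem_insert, Finset.mem_erase, Finset.mem_singleton]
  by_cases hz : z = ℓ₀ <;> simp [hz]

lemma Dterm_bound (x : (Fin L → Bool) → ℝ) (hx0 : ∀ γ, 0 ≤ x γ)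
    (hx1 : ∑ γ : Fin L → Bool, x γ = 1) (ℓ₀ : Fin L) (p : Fin L × Fin L) :
    |Dterm x ℓ₀ (oneMarg x ℓ₀ true) p|
      ≤ ∑ γ : (↥(insert ℓ₀ (({p.1, p.2} : Finset (Fin L)).erase ℓ₀)) → Bool),
          |marg (insert ℓ₀ (({p.1, p.2} : Finset (Fin L)).erase ℓ₀)) x γ
            - piMarg (insert ℓ₀ (({p.1, p.2} : Finset (Fin L)).erase ℓ₀)) x γ| := by
  have hc0 : 0 ≤ oneMarg x ℓ₀ true := by
    unfold oneMarg
    refine Finset.sum_nonneg fun γ _ => ?_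
    split <;> [exact hx0 γ; exact le_rfl]
  have hc1 : oneMarg x ℓ₀ true ≤ 1 := by
    rw [← hx1]
    unfold oneMarg
    refine Finset.sum_le_sum fun γ _ => ?_
    split <;> [exact le_rfl; exact hx0 γ]
  refine proj_bound x hx1 _ _ ?_ ?_
  · intro γ γ' h
    rw [insert_erase_pair] at h
    have h0 : γ ℓ₀ = γ' ℓ₀ := h ℓ₀ (by simp)
    have h1 : γ p.1 = γ' p.1 := h p.1 (by simp)
    have h2 : γ p.2 = γ' p.2 := h p.2 (by simp)
    rw [h0, h1, h2]
  · intro γ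
    rw [abs_mul, abs_mul]
    have hs : ∀ b, |spin b| = 1 := by intro b; cases b <;> norm_num [spin]
    rw [hs, hs, one_mul, one_mul]
    rw [abs_le]
    constructor <;> split <;> nlinarith

end DLem
section Count
variable {L : ℕ}

lemma pair_cases (ℓ₀ a b c d : Fin L) (hab : a ≠ b) (hcd : c ≠ d)
    (h : ({a, b} : Finset (Fin L)).erase ℓ₀ = ({c, d} : Finset (Fin L)).erase ℓ₀) :
    (c = a ∧ d = b) ∨ (c = b ∧ d = a) := by
  rw [Finset.ext_iff] at h
  simp only [Finset.mem_erase, Finset.mem_insert, Finset.mem_singleton] at h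
  have ha := h a
  have hb := h b
  have hc := h c
  have hd := h d
  by_cases h1 : a = ℓ₀ <;> by_cases h2 : b = ℓ₀ <;> by_cases h3 : c = ℓ₀ <;>
    by_cases h4 : d = ℓ₀ <;> simp_all <;> try tauto
  all_goals have hc2 := h c h3
  all_goals have hd2 := h d h4
  · have e1 : c = b := hc2.mpr (Or.inl rfl)
    have e2 : d = b := hd2.mpr (Or.inr rfl)
    exact hcd (e1.trans e2.symm)
  · have e1 : c = a := hc2.mpr (Or.inl rfl)
    have e2 : d = a := hd2.mpr (Or.inr rfl)
    exact hcd (e1.trans e2.symm)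
  · have e1 : c = a ∨ c = b := hc2.mpr (Or.inl rfl)
    have e2 : d = a ∨ d = b := hd2.mpr (Or.inr rfl)
    rcases e1 with e1 | e1 <;> rcases e2 with e2 | e2
    · exact absurd (e1.trans e2.symm) hcd
    · exact Or.inl ⟨e1, e2⟩
    · exact Or.inr ⟨e1, e2⟩
    · exact absurd (e1.trans e2.symm) hcd

lemma fiber_card_le (ℓ₀ : Fin L) (A : Finset (Fin L)) :
    ((Finset.univ.offDiag : Finset (Fin L × Fin L)).filter
      (fun p => ({p.1, p.2} : Finset (Fin L)).erase ℓ₀ = A)).card ≤ 2 := by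
  by_cases hne : (((Finset.univ.offDiag : Finset (Fin L × Fin L))).filter
      (fun p => ({p.1, p.2} : Finset (Fin L)).erase ℓ₀ = A)).Nonempty
  · obtain ⟨⟨a, b⟩, hab⟩ := hne
    rw [Finset.mem_filter, Finset.mem_offDiag] at hab
    obtain ⟨⟨-, -, hab'⟩, hA⟩ := hab
    have hsub : ((Finset.univ.offDiag : Finset (Fin L × Fin L))).filter
        (fun p => ({p.1, p.2} : Finset (Fin L)).erase ℓ₀ = A)
        ⊆ {(a, b), (b, a)} := by
      rintro ⟨c, d⟩ hcd
      rw [Finset.mem_filter, Finset.mem_offDiag] at hcd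
      obtain ⟨⟨-, -, hcd'⟩, hA'⟩ := hcd
      have := pair_cases ℓ₀ a b c d hab' hcd' (hA.trans hA'.symm)
      simp only [Finset.mem_insert, Finset.mem_singleton, Prod.mk.injEq]
      tauto
    exact (Finset.card_le_card hsub).trans
      ((Finset.card_insert_le _ _).trans (by simp))
  · rw [Finset.not_nonempty_iff_eq_empty] at hne
    simp [hne]

lemma kappa_mem (ℓ₀ : Fin L) (p : Fin L × Fin L) (hp : p ∈ (Finset.univ.offDiag : Finset (Fin L × Fin L))) :
    ({p.1, p.2} : Finset (Fin L)).erase ℓ₀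
      ∈ (Finset.univ.erase ℓ₀).powerset.filter (fun A => 1 ≤ A.card ∧ A.card ≤ 2) := by
  rw [Finset.mem_offDiag] at hp
  obtain ⟨-, -, hne⟩ := hp
  rw [Finset.mem_filter, Finset.mem_powerset]
  refine ⟨Finset.erase_subset_erase ℓ₀ (Finset.subset_univ _), ?_, ?_⟩
  · have hcard : ({p.1, p.2} : Finset (Fin L)).card = 2 := Finset.card_pair hne
    have := Finset.pred_card_le_card_erase (s := ({p.1, p.2} : Finset (Fin L))) (a := ℓ₀)
    omega
  · exact (Finset.card_erase_le).trans (le_of_eq (Finset.card_pair hne))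

end Count
/-- For `W = Z²`:
`|S^{ℓ₀}(x) - S^{ℓ₀}(π(x))| ≤ (2/L²) ∑_{A⊆[L]∖{ℓ₀}, 1≤#A≤2} ‖x^{{ℓ₀}∪A} - π(x^{{ℓ₀}∪A})‖₁`. -/
theorem selCoef_dist_to_LE {L : ℕ} (hL : 1 ≤ L)
    (x : (Fin L → Bool) → ℝ)
    (hx0 : ∀ γ, 0 ≤ x γ) (hx1 : ∑ γ : Fin L → Bool, x γ = 1)
    (ℓ₀ : Fin L) :
    |selCoef x ℓ₀ - selCoef (piProj x) ℓ₀|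
      ≤ (2 / (L : ℝ) ^ 2) *
          ∑ A ∈ (univ.erase ℓ₀).powerset.filter (fun A => 1 ≤ A.card ∧ A.card ≤ 2),
            ∑ γ : (↥(insert ℓ₀ A) → Bool),
              |marg (insert ℓ₀ A) x γ - piMarg (insert ℓ₀ A) x γ| := by
  classical
  set c : ℝ := oneMarg x ℓ₀ true with hc
  set N : Finset (Fin L) → ℝ := fun A => ∑ γ : (↥(insert ℓ₀ A) → Bool),
    |marg (insert ℓ₀ A) x γ - piMarg (insert ℓ₀ A) x γ| with hN
  have hNnn : ∀ A, 0 ≤ N A := fun A => Finset.sum_nonneg fun γ _ => abs_nonneg _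
  have hcx : expec x (fun γ => if γ ℓ₀ = true then 1 else 0) = c := expec_ind x ℓ₀
  have hcy : expec (piProj x) (fun γ => if γ ℓ₀ = true then 1 else 0) = c := by
    rw [expec_ind, oneMarg_piProj x hx1]
  rw [selCoef_expand x ℓ₀ c hcx, selCoef_expand (piProj x) ℓ₀ c hcy,
    ← mul_sub, ← Finset.sum_sub_distrib]
  have hD : ∀ p : Fin L × Fin L,
      ((∑ γ : Fin L → Bool, (spin (γ p.1) * spin (γ p.2)
          * ((if γ ℓ₀ = true then 1 else 0) - c)) * x γ)
        - ∑ γ : Fin L → Bool, (spin (γ p.1) * spin (γ p.2)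
          * ((if γ ℓ₀ = true then 1 else 0) - c)) * piProj x γ)
        = Dterm x ℓ₀ c p := by
    intro p
    unfold Dterm
    rw [← Finset.sum_sub_distrib]
    exact Finset.sum_congr rfl fun γ _ => by ring
  rw [Finset.sum_congr rfl fun p _ => hD p, abs_mul,
    abs_of_nonneg (show (0:ℝ) ≤ 1 / (L : ℝ) ^ 2 by positivity)]
  set T := (univ.erase ℓ₀).powerset.filter (fun A => 1 ≤ A.card ∧ A.card ≤ 2) with hT
  have key : |∑ p : Fin L × Fin L, Dterm x ℓ₀ c p| ≤ 2 * ∑ A ∈ T, N A := by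
    calc |∑ p : Fin L × Fin L, Dterm x ℓ₀ c p|
        ≤ ∑ p : Fin L × Fin L, |Dterm x ℓ₀ c p| := Finset.abs_sum_le_sum_abs _ _
      _ = ∑ p ∈ (univ.offDiag : Finset (Fin L × Fin L)), |Dterm x ℓ₀ c p| := by
          refine (Finset.sum_subset (Finset.subset_univ _) fun p _ hp => ?_).symm
          rw [Finset.mem_offDiag] at hp
          push_neg at hp
          have hpp : p = (p.1, p.1) := by
            have := hp (Finset.mem_univ _) (Finset.mem_univ _)
            exact Prod.ext rfl this.symm
          rw [hpp, abs_eq_zero]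
          exact Dterm_diag x hx1 ℓ₀ p.1
      _ ≤ ∑ p ∈ (univ.offDiag : Finset (Fin L × Fin L)),
            N (({p.1, p.2} : Finset (Fin L)).erase ℓ₀) :=
          Finset.sum_le_sum fun p _ => Dterm_bound x hx0 hx1 ℓ₀ p
      _ = ∑ A ∈ T, ∑ p ∈ (univ.offDiag : Finset (Fin L × Fin L)).filter
            (fun p => ({p.1, p.2} : Finset (Fin L)).erase ℓ₀ = A), N A :=
          (Finset.sum_fiberwise_of_maps_to' (fun p hp => kappa_mem ℓ₀ p hp) N).symm
      _ ≤ ∑ A ∈ T, 2 * N A := by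
          refine Finset.sum_le_sum fun A _ => ?_
          rw [Finset.sum_const, nsmul_eq_mul]
          refine mul_le_mul_of_nonneg_right ?_ (hNnn A)
          exact_mod_cast fiber_card_le ℓ₀ A
      _ = 2 * ∑ A ∈ T, N A := by rw [Finset.mul_sum]
  calc 1 / (L : ℝ) ^ 2 * |∑ p : Fin L × Fin L, Dterm x ℓ₀ c p|
      ≤ 1 / (L : ℝ) ^ 2 * (2 * ∑ A ∈ T, N A) :=
        mul_le_mul_of_nonneg_left key (by positivity)
    _ = (2 / (L : ℝ) ^ 2) * ∑ A ∈ T, N A := by ring
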